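/- arXiv:2501.18069 — 9 statements merged into one kernel-verified Lean document; each statement's English description precedes it below -/
import Mathlib

section
/- Let C be a nonempty finite set, let W : C → ℝ be a weight function with ∑_{c∈C} W(c) > 0, and let W_v : C → ℝ satisfy W_v(c) > 0 for all c ∈ C. Then the negativity satisfies the lower bound (∑_{c} W(c)²/W_v(c)) · (∑_{c} W_v(c)) / (∑_{c} W(c))² ≥ ((∑_{c} |W(c)|) / (∑_{c} W(c)))². -/
open Finset

/-- **Negativity lower bound.** For a nonempty finite configuration space `C`, weights
`W : C → ℝ` with positive total weight, and positive virtual weights `W_v`, the squared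
negativity `(∑ W²/W_v)(∑ W_v)/(∑ W)²` is at least `((∑ |W|)/(∑ W))²`. -/
theorem negativity_lower_bound {C : Type*} [Fintype C] [Nonempty C]
    (W Wv : C → ℝ) (hW : 0 < ∑ c, W c) (hWv : ∀ c, 0 < Wv c) :
    ((∑ c, |W c|) / (∑ c, W c)) ^ 2 ≤
      (∑ c, (W c) ^ 2 / Wv c) * (∑ c, Wv c) / (∑ c, W c) ^ 2 := by
  rw [div_pow]
  apply div_le_div_of_nonneg_right _ (by positivity)
  have key := Finset.sum_mul_sq_le_sq_mul_sq Finset.univ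
    (fun c => |W c| / Real.sqrt (Wv c)) (fun c => Real.sqrt (Wv c))
  simp only [div_pow] at key
  calc (∑ c, |W c|) ^ 2
      = (∑ c, |W c| / Real.sqrt (Wv c) * Real.sqrt (Wv c)) ^ 2 := by
        congr 1; apply Finset.sum_congr rfl; intro c _
        rw [div_mul_cancel₀ _ (Real.sqrt_ne_zero'.2 (hWv c))]
    _ ≤ (∑ c, |W c| ^ 2 / Real.sqrt (Wv c) ^ 2) * ∑ c, Real.sqrt (Wv c) ^ 2 := key
    _ = (∑ c, (W c) ^ 2 / Wv c) * ∑ c, Wv c := by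
        congr 1 <;> apply Finset.sum_congr rfl <;> intro c _ <;>
          rw [Real.sq_sqrt (hWv c).le] <;> rw [sq_abs]
end

section
/- Let C be a nonempty finite set, let W : C → ℝ satisfy W(c) ≠ 0 for every c ∈ C and ∑_{c∈C} W(c) > 0, and let W_v : C → ℝ satisfy W_v(c) > 0 for all c. If equality holds in the negativity bound, i.e. (∑_{c} W(c)²/W_v(c)) · (∑_{c} W_v(c)) = (∑_{c} |W(c)|)², then there exists t > 0 such that W_v(c) = t·|W(c)| for all c ∈ C. Hence, up to an overall positive scale, the stoquastic choice W_v = |W| is the unique optimal virtual weight. -/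
open Finset

/-
Equality in Cauchy–Schwarz. With `r = (∑ a) / (∑ w)` one has
`∑ (a - r w)² / w = ∑ a² / w - (∑ a)² / ∑ w`, which vanishes under the equality
hypothesis; a vanishing sum of nonnegative terms forces `a = r w` termwise.
Applied to `a = |W|`, `w = W_v`, positivity of `∑ W` makes `r` positive.
-/

theorem Finset.sum_sq_sub_mul_div_eq {ι : Type*} (s : Finset ι) (a w : ι → ℝ)
    (hw : ∀ i ∈ s, w i ≠ 0) (r : ℝ) :
    ∑ i ∈ s, (a i - r * w i) ^ 2 / w i
      = ∑ i ∈ s, a i ^ 2 / w i - 2 * r * ∑ i ∈ s, a i + r ^ 2 * ∑ i ∈ s, w i := by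
  rw [mul_sum, mul_sum, ← sum_sub_distrib, ← sum_add_distrib]
  refine sum_congr rfl fun i hi => ?_
  field_simp [hw i hi]
  ring

theorem Finset.exists_eq_mul_of_sum_sq_div_mul_sum_eq_sq {ι : Type*} (s : Finset ι)
    (a w : ι → ℝ) (hw : ∀ i ∈ s, 0 < w i)
    (h : (∑ i ∈ s, a i ^ 2 / w i) * ∑ i ∈ s, w i = (∑ i ∈ s, a i) ^ 2) :
    ∃ r, ∀ i ∈ s, a i = r * w i := by
  rcases s.eq_empty_or_nonempty with rfl | hs
  · exact ⟨0, by simp⟩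
  have hsum : 0 < ∑ i ∈ s, w i := sum_pos hw hs
  set r := (∑ i ∈ s, a i) / ∑ i ∈ s, w i with hr
  have hzero : ∑ i ∈ s, (a i - r * w i) ^ 2 / w i = 0 := by
    rw [sum_sq_sub_mul_div_eq s a w (fun i hi => (hw i hi).ne'),
      eq_div_of_mul_eq hsum.ne' h, hr]
    field_simp
    ring
  have hterm := (sum_eq_zero_iff_of_nonneg fun i hi =>
    div_nonneg (sq_nonneg _) (hw i hi).le).1 hzero
  refine ⟨r, fun i hi => ?_⟩
  have := hterm i hi
  rw [div_eq_zero_iff, or_iff_left (hw i hi).ne', sq_eq_zero_iff, sub_eq_zero] at this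
  exact this

theorem negativity_eq_iff_stoquastic_general {C : Type*} [Fintype C]
    (W Wv : C → ℝ) (hW : 0 < ∑ c, W c) (hWv : ∀ c, 0 < Wv c)
    (heq : (∑ c, (W c) ^ 2 / Wv c) * (∑ c, Wv c) = (∑ c, |W c|) ^ 2) :
    ∃ t : ℝ, 0 < t ∧ ∀ c, Wv c = t * |W c| := by
  simp_rw [← sq_abs (W _)] at heq
  obtain ⟨r, hr⟩ := univ.exists_eq_mul_of_sum_sq_div_mul_sum_eq_sq (|W ·|) Wv
    (fun c _ => hWv c) heq
  have habs_pos : 0 < ∑ c, |W c| := hW.trans_le (sum_le_sum fun c _ => le_abs_self _)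
  have hr_pos : 0 < r := by
    rw [sum_congr rfl hr, ← mul_sum] at habs_pos
    exact pos_of_mul_pos_left habs_pos (sum_nonneg fun c _ => (hWv c).le)
  refine ⟨r⁻¹, inv_pos.2 hr_pos, fun c => ?_⟩
  rw [hr c (mem_univ c), inv_mul_cancel_left₀ hr_pos.ne']

/-- **Uniqueness of the optimal virtual weights.** If equality holds in the negativity bound,
then the virtual weights are a positive multiple of `|W|`. -/
theorem negativity_eq_iff_stoquastic {C : Type*} [Fintype C] [Nonempty C]
    (W Wv : C → ℝ) (hWne : ∀ c, W c ≠ 0) (hW : 0 < ∑ c, W c) (hWv : ∀ c, 0 < Wv c)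
    (heq : (∑ c, (W c) ^ 2 / Wv c) * (∑ c, Wv c) = (∑ c, |W c|) ^ 2) :
    ∃ t : ℝ, 0 < t ∧ ∀ c, Wv c = t * |W c| :=
  negativity_eq_iff_stoquastic_general W Wv hW hWv heq
end

section
/- Let G be a Hermitian matrix over ℂ indexed by a finite nonempty type, and let G⁺ be its stoquastic, i.e. the real symmetric matrix with (G⁺)ᵢᵢ = Gᵢᵢ (which is real) and (G⁺)ᵢⱼ = |Gᵢⱼ| for i ≠ j. Then λ(G⁺) ≥ λ(G), where λ denotes the largest eigenvalue; equivalently, the gap negativity η′ = λ(G⁺) − λ(G) is nonnegative. -/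
/-!
Let `v` be a unit eigenvector of `G` for an eigenvalue `λ` and let `|v|` be its entrywise modulus.
Off the diagonal `Re (conj vᵢ Gᵢⱼ vⱼ) ≤ |vᵢ| |Gᵢⱼ| |vⱼ|`, and on the diagonal both sides equal
`Re Gᵢᵢ |vᵢ|²`, so summing gives `λ ≤ ⟨|v|, G⁺ |v|⟩`. Since `|v|` is again a unit vector, the
Rayleigh bound `⟨x, A x⟩ ≤ λ(A) ‖x‖²` (i.e. `λ(A) • 1 - A` is positive semidefinite) yields
`λ ≤ λ(G⁺)`.
-/

open Matrix Finset

/-- The largest eigenvalue of a Hermitian matrix. -/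
noncomputable def maxEig {𝕜 : Type*} [RCLike 𝕜] {n : Type*} [Fintype n] [DecidableEq n]
    {A : Matrix n n 𝕜} (hA : A.IsHermitian) : ℝ := ⨆ i, hA.eigenvalues i


/-- The stoquastic of a complex (Hermitian) matrix: the real matrix keeping the (real)
diagonal entries and replacing each off-diagonal entry by its absolute value. -/
noncomputable def stoqC {n : Type*} [DecidableEq n] (A : Matrix n n ℂ) : Matrix n n ℝ :=
  fun i j => if i = j then (A i j).re else ‖A i j‖

lemma stoqC_isHermitian {n : Type*} [Fintype n] [DecidableEq n] {A : Matrix n n ℂ}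
    (hA : A.IsHermitian) : (stoqC A).IsHermitian := by
  ext i j
  by_cases h : i = j
  · subst h; simp [stoqC, Matrix.conjTranspose_apply]
  · have h1 : star (A j i) = A i j := hA.apply i j
    simp only [Matrix.conjTranspose_apply, stoqC, h, Ne.symm h, if_false, star_trivial]
    rw [← h1]
    simp

open scoped ComplexOrder MatrixOrder in
lemma Matrix.IsHermitian.posSemidef_smul_one_sub {𝕜 : Type*} [RCLike 𝕜] {n : Type*} [Fintype n]
    [DecidableEq n] {A : Matrix n n 𝕜} (hA : A.IsHermitian) {c : ℝ}
    (hc : ∀ i, hA.eigenvalues i ≤ c) : (c • 1 - A).PosSemidef := by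
  have hle : A ≤ algebraMap ℝ _ c := by
    refine le_algebraMap_of_spectrum_le (fun x hx => ?_) hA.isSelfAdjoint
    obtain ⟨i, rfl⟩ := hA.spectrum_real_eq_range_eigenvalues ▸ hx
    exact hc i
  rwa [le_iff, Algebra.algebraMap_eq_smul_one] at hle

lemma Matrix.IsHermitian.re_star_dotProduct_mulVec_le_maxEig_mul {𝕜 : Type*} [RCLike 𝕜] {n : Type*}
    [Fintype n] [DecidableEq n] {A : Matrix n n 𝕜} (hA : A.IsHermitian) (x : n → 𝕜) :
    RCLike.re (star x ⬝ᵥ A *ᵥ x) ≤ maxEig hA * RCLike.re (star x ⬝ᵥ x) := by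
  have hpsd := hA.posSemidef_smul_one_sub fun i => le_ciSup (Set.finite_range _).bddAbove i
  have hform := hpsd.re_dotProduct_nonneg x
  rw [sub_mulVec, dotProduct_sub, smul_mulVec, one_mulVec, dotProduct_smul, map_sub,
    RCLike.smul_re] at hform
  exact sub_nonneg.mp hform

lemma re_star_dotProduct_mulVec_le_stoqC {n : Type*} [Fintype n] [DecidableEq n]
    (G : Matrix n n ℂ) (v : n → ℂ) :
    (star v ⬝ᵥ G *ᵥ v).re ≤ (fun i => ‖v i‖) ⬝ᵥ stoqC G *ᵥ fun i => ‖v i‖ := by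
  simp only [dotProduct, mulVec, Finset.mul_sum, Complex.re_sum]
  refine Finset.sum_le_sum fun i _ => Finset.sum_le_sum fun j _ => ?_
  rcases eq_or_ne i j with rfl | hij
  · have hdiag : star v i * (G i i * v i) = G i i * (‖v i‖ ^ 2 : ℝ) := by
      rw [mul_left_comm, Pi.star_apply, RCLike.star_def, Complex.conj_mul', Complex.ofReal_pow]
    refine le_of_eq ?_
    rw [hdiag, Complex.re_mul_ofReal]
    simp only [stoqC, if_true]
    ring
  · calc _ ≤ ‖star (v i) * (G i j * v j)‖ := Complex.re_le_norm _
      _ = _ := by simp [stoqC, hij]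

/-- **Nonnegativity of the gap negativity.** For a Hermitian matrix `G` over ℂ, the largest
eigenvalue of its stoquastic `G⁺` is at least the largest eigenvalue of `G`:
the gap negativity `η′ = λ(G⁺) − λ(G)` is nonnegative. -/
theorem gapNegativity_nonneg {n : Type*} [Fintype n] [DecidableEq n] [Nonempty n]
    {G : Matrix n n ℂ} (hG : G.IsHermitian) :
    maxEig hG ≤ maxEig (stoqC_isHermitian hG) := by
  refine ciSup_le fun i => ?_
  set v : n → ℂ := ⇑(hG.eigenvectorBasis i)
  set w : n → ℝ := fun j => ‖v j‖
  have hw : star w ⬝ᵥ w = 1 := by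
    simp [w, v, dotProduct, ← sq, ← EuclideanSpace.norm_sq_eq]
  calc hG.eigenvalues i = (star v ⬝ᵥ G *ᵥ v).re := hG.eigenvalues_eq i
    _ ≤ star w ⬝ᵥ stoqC G *ᵥ w := re_star_dotProduct_mulVec_le_stoqC G v
    _ ≤ maxEig (stoqC_isHermitian hG) * (star w ⬝ᵥ w) :=
      (stoqC_isHermitian hG).re_star_dotProduct_mulVec_le_maxEig_mul w
    _ = maxEig (stoqC_isHermitian hG) := by rw [hw, mul_one]
end

section
/- Let G be a Hermitian matrix over ℂ indexed by a finite type, and let G⁺ be its stoquastic. For every vector x ∈ ℂⁿ, the (real) Rayleigh quantity satisfies ⟨x, G x⟩ ≤ ⟨|x|, G⁺ |x|⟩, where |x| is the vector with components |xᵢ|. -/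
open Matrix Finset


lemma Complex.re_star_mul_mul_self (a z : ℂ) : (star z * (a * z)).re = a.re * ‖z‖ ^ 2 := by
  rw [mul_left_comm, Complex.star_def, Complex.conj_mul', ← Complex.ofReal_pow,
    Complex.re_mul_ofReal]

lemma re_star_mul_mul_le_stoqC {n : Type*} [DecidableEq n] (A : Matrix n n ℂ) (x : n → ℂ)
    (i j : n) : (star (x i) * (A i j * x j)).re ≤ ‖x i‖ * (stoqC A i j * ‖x j‖) := by
  by_cases hij : i = j
  · subst hij
    rw [Complex.re_star_mul_mul_self, stoqC, if_pos rfl]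
    exact le_of_eq (by ring)
  · calc (star (x i) * (A i j * x j)).re ≤ ‖star (x i) * (A i j * x j)‖ := Complex.re_le_norm _
      _ = ‖x i‖ * (stoqC A i j * ‖x j‖) := by
        rw [stoqC, if_neg hij, norm_mul, norm_mul, norm_star]

theorem rayleigh_le_stoquastic_rayleigh_general {n : Type*} [Fintype n] [DecidableEq n]
    {G : Matrix n n ℂ} (x : n → ℂ) :
    (star x ⬝ᵥ (G *ᵥ x)).re ≤
      (fun i => ‖x i‖) ⬝ᵥ (stoqC G *ᵥ fun i => ‖x i‖) := by
  simp only [dotProduct, mulVec, Pi.star_apply, Finset.mul_sum, Complex.re_sum]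
  exact sum_le_sum fun i _ => sum_le_sum fun j _ => re_star_mul_mul_le_stoqC G x i j

/-- **Rayleigh quotient bound for the stoquastic.** For a Hermitian matrix `G` over ℂ and
any vector `x`, the (real) Rayleigh quantity satisfies `⟨x, G x⟩ ≤ ⟨|x|, G⁺ |x|⟩`,
where `|x|` is the vector of componentwise absolute values. -/
theorem rayleigh_le_stoquastic_rayleigh {n : Type*} [Fintype n] [DecidableEq n]
    {G : Matrix n n ℂ} (hG : G.IsHermitian) (x : n → ℂ) :
    (star x ⬝ᵥ (G *ᵥ x)).re ≤
      (fun i => ‖x i‖) ⬝ᵥ (stoqC G *ᵥ fun i => ‖x i‖) :=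
  rayleigh_le_stoquastic_rayleigh_general x
end

section
/- Let M and N be real symmetric matrices indexed by the same finite nonempty type. Assume M has nonnegative off-diagonal entries, Nᵢᵢ ≤ Mᵢᵢ for all i, and |Nᵢⱼ| ≤ Mᵢⱼ for all i ≠ j. Then λ(N) ≤ λ(M), where λ denotes the largest eigenvalue. -/
/-!
For every eigenvalue `μ` of `N`, pick a unit eigenvector `v`. Comparing the quadratic forms
term by term, `μ = vᵀ N v ≤ |v|ᵀ M |v|`: the diagonal terms are `Nᵢᵢ vᵢ² ≤ Mᵢᵢ vᵢ²`, and each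
off-diagonal term is at most its absolute value `|Nᵢⱼ| |vᵢ| |vⱼ| ≤ Mᵢⱼ |vᵢ| |vⱼ|`. Since
`λ(M) • 1 - M` is positive semidefinite, `|v|ᵀ M |v| ≤ λ(M) ‖|v|‖² = λ(M)`.
-/

open Matrix Finset

open scoped MatrixOrder

section Domination

variable {n R : Type*} [Fintype n] [CommRing R] [LinearOrder R]

theorem abs_dotProduct_abs (x : n → R) : |x| ⬝ᵥ |x| = x ⬝ᵥ x := by
  simp only [dotProduct, Pi.abs_apply, abs_mul_abs_self]

variable [IsStrictOrderedRing R]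

theorem dotProduct_mulVec_le_abs_dotProduct_mulVec_abs {M N : Matrix n n R}
    (hdiag : ∀ i, N i i ≤ M i i) (hoff : ∀ i j, i ≠ j → |N i j| ≤ M i j) (x : n → R) :
    x ⬝ᵥ N *ᵥ x ≤ |x| ⬝ᵥ M *ᵥ |x| := by
  simp only [dotProduct, mulVec, Finset.mul_sum, Pi.abs_apply]
  refine Finset.sum_le_sum fun i _ => Finset.sum_le_sum fun j _ => ?_
  rcases eq_or_ne i j with rfl | hij
  · calc x i * (N i i * x i) = N i i * (x i * x i) := by ring
      _ ≤ M i i * (x i * x i) := by gcongr; exacts [mul_self_nonneg _, hdiag i]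
      _ = |x i| * (M i i * |x i|) := by rw [← abs_mul_abs_self (x i)]; ring
  · calc x i * (N i j * x j) ≤ |x i| * (|N i j| * |x j|) := by
          rw [← abs_mul, ← abs_mul]; exact le_abs_self _
      _ ≤ |x i| * (M i j * |x j|) := by gcongr; exact hoff i j hij

end Domination

namespace Matrix.IsHermitian

variable {n : Type*} [Fintype n] [DecidableEq n]

theorem eigenvalues_le_maxEig {𝕜 : Type*} [RCLike 𝕜] {A : Matrix n n 𝕜} (hA : A.IsHermitian)
    (i : n) : hA.eigenvalues i ≤ maxEig hA :=
  le_ciSup (Set.finite_range _).bddAbove i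

theorem le_algebraMap_maxEig {𝕜 : Type*} [RCLike 𝕜] {A : Matrix n n 𝕜} (hA : A.IsHermitian) :
    A ≤ algebraMap ℝ (Matrix n n 𝕜) (maxEig hA) := by
  refine le_algebraMap_of_spectrum_le (fun μ hμ => ?_) hA
  obtain ⟨i, rfl⟩ := hA.spectrum_real_eq_range_eigenvalues ▸ hμ
  exact hA.eigenvalues_le_maxEig i

theorem dotProduct_mulVec_le_maxEig_mul {A : Matrix n n ℝ} (hA : A.IsHermitian) (x : n → ℝ) :
    x ⬝ᵥ A *ᵥ x ≤ maxEig hA * (x ⬝ᵥ x) := by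
  have hpsd := hA.le_algebraMap_maxEig.dotProduct_mulVec_nonneg x
  rw [Algebra.algebraMap_eq_smul_one, sub_mulVec, smul_mulVec, one_mulVec, dotProduct_sub,
    dotProduct_smul, star_trivial, smul_eq_mul] at hpsd
  linarith

theorem eigenvalues_eq_dotProduct_mulVec {A : Matrix n n ℝ} (hA : A.IsHermitian) (i : n) :
    hA.eigenvalues i = (hA.eigenvectorBasis i).ofLp ⬝ᵥ A *ᵥ (hA.eigenvectorBasis i).ofLp := by
  simpa using hA.eigenvalues_eq i

theorem dotProduct_self_eigenvectorBasis {A : Matrix n n ℝ} (hA : A.IsHermitian) (i : n) :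
    (hA.eigenvectorBasis i).ofLp ⬝ᵥ (hA.eigenvectorBasis i).ofLp = 1 := by
  have h := hA.eigenvectorBasis.inner_eq_one i
  rwa [EuclideanSpace.inner_eq_star_dotProduct, star_trivial] at h

end Matrix.IsHermitian

theorem maxEig_le_of_entrywise_dominated_general {n : Type*} [Fintype n] [DecidableEq n] [Nonempty n]
    {M N : Matrix n n ℝ} (hM : M.IsHermitian) (hN : N.IsHermitian)
    (hdiag : ∀ i, N i i ≤ M i i)
    (hoff : ∀ i j, i ≠ j → |N i j| ≤ M i j) :
    maxEig hN ≤ maxEig hM := by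
  refine ciSup_le fun i => ?_
  set v := (hN.eigenvectorBasis i).ofLp
  calc hN.eigenvalues i = v ⬝ᵥ N *ᵥ v := hN.eigenvalues_eq_dotProduct_mulVec i
    _ ≤ |v| ⬝ᵥ M *ᵥ |v| := dotProduct_mulVec_le_abs_dotProduct_mulVec_abs hdiag hoff v
    _ ≤ maxEig hM * (|v| ⬝ᵥ |v|) := hM.dotProduct_mulVec_le_maxEig_mul |v|
    _ = maxEig hM := by rw [abs_dotProduct_abs, hN.dotProduct_self_eigenvectorBasis, mul_one]

/-- **Eigenvalue domination.** If `M` is real symmetric with nonnegative off-diagonal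
entries, `N` is real symmetric with `Nᵢᵢ ≤ Mᵢᵢ` and `|Nᵢⱼ| ≤ Mᵢⱼ` off the diagonal,
then `λ(N) ≤ λ(M)`. -/
theorem maxEig_le_of_entrywise_dominated {n : Type*} [Fintype n] [DecidableEq n] [Nonempty n]
    {M N : Matrix n n ℝ} (hM : M.IsHermitian) (hN : N.IsHermitian)
    (hMoff : ∀ i j, i ≠ j → 0 ≤ M i j)
    (hdiag : ∀ i, N i i ≤ M i i)
    (hoff : ∀ i j, i ≠ j → |N i j| ≤ M i j) :
    maxEig hN ≤ maxEig hM :=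
  maxEig_le_of_entrywise_dominated_general hM hN hdiag hoff
end

section
/- Let {g_b}_{b∈B} be a finite family of real symmetric matrices indexed by a finite nonempty type, and let G = ∑_{b∈B} g_b. Then the largest eigenvalue of the stoquastic of the sum is bounded by the sum of the largest eigenvalues of the stoquastics of the terms: λ(G⁺) ≤ ∑_{b∈B} λ(g_b⁺). -/
open Matrix Finset

/-- The stoquastic of a real matrix: keep the diagonal, take absolute values off-diagonal. -/
def stoq {n : Type*} [DecidableEq n] (A : Matrix n n ℝ) : Matrix n n ℝ :=
  fun i j => if i = j then A i j else |A i j|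

lemma stoq_isHermitian {n : Type*} [Fintype n] [DecidableEq n] {A : Matrix n n ℝ}
    (hA : A.IsHermitian) : (stoq A).IsHermitian := by
  ext i j
  by_cases h : i = j
  · subst h; simp [stoq, Matrix.conjTranspose_apply]
  · have := hA.apply i j
    simp only [Matrix.conjTranspose_apply, stoq, h, Ne.symm h, if_false, star_trivial] at *
    rw [this]

lemma isHermitian_sum {𝕜 : Type*} [RCLike 𝕜] {n B : Type*} [Fintype n] [Fintype B]
    (g : B → Matrix n n 𝕜) (hg : ∀ b, (g b).IsHermitian) : (∑ b, g b).IsHermitian := by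
  unfold Matrix.IsHermitian
  rw [Matrix.conjTranspose_sum]
  exact Finset.sum_congr rfl fun b _ => (hg b).eq

namespace Matrix

variable {n : Type*} [Fintype n]

open scoped ComplexOrder in
theorem IsHermitian.posSemidef_smul_one_sub_iff {𝕜 : Type*} [RCLike 𝕜] [DecidableEq n]
    {A : Matrix n n 𝕜} (hA : A.IsHermitian) (c : ℝ) :
    (c • 1 - A).PosSemidef ↔ ∀ i, hA.eigenvalues i ≤ c := by
  have hdiag : c • 1 - A = Unitary.conjStarAlgAut 𝕜 _ hA.eigenvectorUnitary
      (diagonal (RCLike.ofReal ∘ fun i => c - hA.eigenvalues i)) := by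
    conv_lhs => rw [hA.spectral_theorem]
    rw [RCLike.real_smul_eq_coe_smul (K := 𝕜),
      ← map_one (Unitary.conjStarAlgAut 𝕜 _ hA.eigenvectorUnitary), ← map_smul, ← map_sub]
    congr 1
    ext i j
    by_cases h : i = j <;> simp [h, diagonal, RCLike.real_smul_eq_coe_mul]
  rw [hdiag, Unitary.conjStarAlgAut_apply,
    IsUnit.posSemidef_star_right_conjugate_iff Unitary.isUnit_coe, posSemidef_diagonal_iff]
  simp

theorem IsHermitian.eigenvalues_le_maxEig_s8 [DecidableEq n] {𝕜 : Type*} [RCLike 𝕜]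
    {A : Matrix n n 𝕜} (hA : A.IsHermitian) (i : n) : hA.eigenvalues i ≤ maxEig hA :=
  le_ciSup (Set.finite_range _).bddAbove i

theorem IsHermitian.exists_eigenvalues_eq_maxEig [DecidableEq n] [Nonempty n] {𝕜 : Type*}
    [RCLike 𝕜] {A : Matrix n n 𝕜} (hA : A.IsHermitian) : ∃ i, hA.eigenvalues i = maxEig hA := by
  obtain ⟨i, hi⟩ := Finite.exists_max hA.eigenvalues
  exact ⟨i, le_antisymm (hA.eigenvalues_le_maxEig_s8 i) (ciSup_le hi)⟩

theorem IsHermitian.dotProduct_mulVec_le_maxEig_mul_s8 [DecidableEq n] {A : Matrix n n ℝ}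
    (hA : A.IsHermitian) (x : n → ℝ) : x ⬝ᵥ (A *ᵥ x) ≤ maxEig hA * (x ⬝ᵥ x) := by
  have := ((hA.posSemidef_smul_one_sub_iff _).mpr hA.eigenvalues_le_maxEig_s8)
    |>.dotProduct_mulVec_nonneg x
  simp only [star_trivial, sub_mulVec, smul_mulVec, one_mulVec, dotProduct_sub, dotProduct_smul,
    smul_eq_mul] at this
  linarith

theorem IsHermitian.exists_dotProduct_mulVec_eq_maxEig [DecidableEq n] [Nonempty n]
    {A : Matrix n n ℝ} (hA : A.IsHermitian) :
    ∃ x : n → ℝ, x ⬝ᵥ x = 1 ∧ x ⬝ᵥ (A *ᵥ x) = maxEig hA := by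
  obtain ⟨i, hi⟩ := hA.exists_eigenvalues_eq_maxEig
  have hunit : (hA.eigenvectorBasis i : n → ℝ) ⬝ᵥ hA.eigenvectorBasis i = 1 := by
    have := hA.eigenvectorBasis.inner_eq_one i
    rwa [EuclideanSpace.inner_eq_star_dotProduct, star_trivial, dotProduct_comm] at this
  refine ⟨hA.eigenvectorBasis i, hunit, ?_⟩
  rw [hA.mulVec_eigenvectorBasis, dotProduct_smul, hunit, smul_eq_mul, mul_one, hi]

theorem dotProduct_mulVec_le_abs {M : Matrix n n ℝ} (hM : ∀ i j, i ≠ j → 0 ≤ M i j)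
    (x : n → ℝ) : x ⬝ᵥ (M *ᵥ x) ≤ |x| ⬝ᵥ (M *ᵥ |x|) := by
  simp only [dotProduct, mulVec, Finset.mul_sum, Pi.abs_apply]
  refine Finset.sum_le_sum fun i _ => Finset.sum_le_sum fun j _ => ?_
  rcases eq_or_ne i j with rfl | hij
  · linear_combination M i i * (abs_mul_abs_self (x i)).symm
  · calc x i * (M i j * x j) ≤ |x i * (M i j * x j)| := le_abs_self _
      _ = |x i| * (M i j * |x j|) := by rw [abs_mul, abs_mul, abs_of_nonneg (hM i j hij)]

theorem dotProduct_mulVec_mono {M N : Matrix n n ℝ} (h : ∀ i j, M i j ≤ N i j) {x y : n → ℝ}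
    (hx : 0 ≤ x) (hy : 0 ≤ y) : x ⬝ᵥ (M *ᵥ y) ≤ x ⬝ᵥ (N *ᵥ y) := by
  simp only [dotProduct, mulVec]
  gcongr with i _ j _
  · exact hx i
  · exact hy j
  · exact h i j

end Matrix

theorem stoq_apply_nonneg {n : Type*} [DecidableEq n] (A : Matrix n n ℝ) {i j : n} (h : i ≠ j) :
    0 ≤ stoq A i j := by
  simp [stoq, h]

theorem stoq_sum_apply_le {n B : Type*} [DecidableEq n] (s : Finset B) (g : B → Matrix n n ℝ)
    (i j : n) : stoq (∑ b ∈ s, g b) i j ≤ ∑ b ∈ s, stoq (g b) i j := by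
  by_cases h : i = j
  · simp [stoq, h, Matrix.sum_apply]
  · simpa [stoq, h, Matrix.sum_apply] using Finset.abs_sum_le_sum_abs _ _

/-- **Subadditivity of the stoquastic largest eigenvalue.** For a finite family of real
symmetric matrices `g b` with sum `G`, the largest eigenvalue of the stoquastic of `G`
is at most the sum of the largest eigenvalues of the stoquastics of the terms. -/
theorem maxEig_stoq_sum_le {n B : Type*} [Fintype n] [DecidableEq n] [Nonempty n] [Fintype B]
    (g : B → Matrix n n ℝ) (hg : ∀ b, (g b).IsHermitian) :
    maxEig (stoq_isHermitian (isHermitian_sum g hg)) ≤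
      ∑ b, maxEig (stoq_isHermitian (hg b)) := by
  obtain ⟨x, hx_unit, hx_max⟩ :=
    (stoq_isHermitian (isHermitian_sum g hg)).exists_dotProduct_mulVec_eq_maxEig
  have habs_unit : |x| ⬝ᵥ |x| = 1 := by
    rw [← hx_unit]
    exact Finset.sum_congr rfl fun i _ => abs_mul_abs_self (x i)
  calc maxEig (stoq_isHermitian (isHermitian_sum g hg))
      = x ⬝ᵥ (stoq (∑ b, g b) *ᵥ x) := hx_max.symm
    _ ≤ |x| ⬝ᵥ (stoq (∑ b, g b) *ᵥ |x|) :=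
        Matrix.dotProduct_mulVec_le_abs (fun _ _ => stoq_apply_nonneg _) x
    _ ≤ |x| ⬝ᵥ ((∑ b, stoq (g b)) *ᵥ |x|) :=
        Matrix.dotProduct_mulVec_mono (by simpa [Matrix.sum_apply] using stoq_sum_apply_le _ g)
          (abs_nonneg x) (abs_nonneg x)
    _ = ∑ b, |x| ⬝ᵥ (stoq (g b) *ᵥ |x|) := by rw [Matrix.sum_mulVec, dotProduct_sum]
    _ ≤ ∑ b, maxEig (stoq_isHermitian (hg b)) := by
        gcongr with b
        simpa [habs_unit] using (stoq_isHermitian (hg b)).dotProduct_mulVec_le_maxEig_mul_s8 |x|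
end

section
/- Let M be a real symmetric matrix indexed by a finite nonempty type and let M⁺ be its stoquastic. Then λ(M⁺) equals the supremum, over all unit vectors ψ with nonnegative components, of ∑_{i≠j} ψᵢ ψⱼ |Mᵢⱼ| + ∑_i ψᵢ² Mᵢᵢ. -/
open Matrix Finset

/-! A top eigenvector `v` of `M⁺` attains `λ(M⁺)` as the value of the quadratic form of `M⁺`, which
is the objective, and the Rayleigh bound shows no unit vector does better. Since the off-diagonal
entries of `M⁺` are nonnegative, passing from `v` to `|v|` cannot decrease the quadratic form, so
the supremum is already attained on nonnegative unit vectors. -/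

open scoped MatrixOrder

section
variable {𝕜 n : Type*} [RCLike 𝕜] [Fintype n] [DecidableEq n] {A : Matrix n n 𝕜}

lemma Matrix.IsHermitian.eigenvalues_le_maxEig_s10 (hA : A.IsHermitian) (i : n) :
    hA.eigenvalues i ≤ maxEig hA :=
  le_ciSup (Set.finite_range _).bddAbove i

lemma Matrix.IsHermitian.exists_eigenvalues_eq_maxEig_s10 [Nonempty n] (hA : A.IsHermitian) :
    ∃ i, hA.eigenvalues i = maxEig hA :=
  exists_eq_ciSup_of_finite

lemma Matrix.IsHermitian.le_algebraMap_maxEig_s10 (hA : A.IsHermitian) :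
    A ≤ algebraMap ℝ (Matrix n n 𝕜) (maxEig hA) := by
  rw [le_algebraMap_iff_spectrum_le hA.isSelfAdjoint, hA.spectrum_real_eq_range_eigenvalues]
  rintro _ ⟨i, rfl⟩
  exact hA.eigenvalues_le_maxEig_s10 i

end

section
variable {n : Type*} [Fintype n] [DecidableEq n] {A : Matrix n n ℝ}

lemma Matrix.IsHermitian.dotProduct_mulVec_le_maxEig_mul_s10 (hA : A.IsHermitian) (x : n → ℝ) :
    x ⬝ᵥ A *ᵥ x ≤ maxEig hA * (x ⬝ᵥ x) := by
  have := hA.le_algebraMap_maxEig_s10.dotProduct_mulVec_nonneg x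
  simp only [Algebra.algebraMap_eq_smul_one, sub_mulVec, smul_mulVec, one_mulVec, dotProduct_sub,
    dotProduct_smul, star_trivial, smul_eq_mul] at this
  linarith

lemma Matrix.IsHermitian.exists_dotProduct_mulVec_eq_maxEig_s10 [Nonempty n] (hA : A.IsHermitian) :
    ∃ x : n → ℝ, x ⬝ᵥ x = 1 ∧ x ⬝ᵥ A *ᵥ x = maxEig hA := by
  obtain ⟨i, hi⟩ := hA.exists_eigenvalues_eq_maxEig_s10
  refine ⟨hA.eigenvectorBasis i, ?_, ?_⟩
  · have := hA.eigenvectorBasis.inner_eq_one i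
    rwa [EuclideanSpace.inner_eq_star_dotProduct, star_trivial] at this
  · simpa [hi] using (hA.eigenvalues_eq i).symm

end

lemma dotProduct_mulVec_le_abs_of_nonneg_of_ne {n : Type*} [Fintype n] {B : Matrix n n ℝ}
    (hB : ∀ i j, i ≠ j → 0 ≤ B i j) (x : n → ℝ) : x ⬝ᵥ B *ᵥ x ≤ |x| ⬝ᵥ B *ᵥ |x| := by
  simp only [dotProduct, mulVec, Finset.mul_sum, Pi.abs_apply]
  refine Finset.sum_le_sum fun i _ ↦ Finset.sum_le_sum fun j _ ↦ ?_
  obtain rfl | hij := eq_or_ne i j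
  · rw [mul_left_comm, mul_left_comm |x i|, abs_mul_abs_self]
  · rw [mul_left_comm, mul_left_comm |x i|, ← abs_mul]
    exact mul_le_mul_of_nonneg_left (le_abs_self _) (hB i j hij)

section
variable {n : Type*} [DecidableEq n]

lemma stoq_nonneg_of_ne (M : Matrix n n ℝ) {i j : n} (hij : i ≠ j) : 0 ≤ stoq M i j := by
  simp [stoq, hij]

lemma dotProduct_stoq_mulVec [Fintype n] (M : Matrix n n ℝ) (ψ : n → ℝ) :
    ψ ⬝ᵥ stoq M *ᵥ ψ =
      (∑ i, ∑ j ∈ Finset.univ \ {i}, ψ i * ψ j * |M i j|) + ∑ i, ψ i ^ 2 * M i i := by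
  simp only [dotProduct, mulVec, Finset.mul_sum, ← Finset.sum_add_distrib]
  refine Finset.sum_congr rfl fun i _ ↦ ?_
  rw [Finset.sum_eq_sum_sdiff_singleton_add (Finset.mem_univ i)]
  congr 1
  · refine Finset.sum_congr rfl fun j hj ↦ ?_
    have hij : i ≠ j := fun h ↦ by simp [h] at hj
    simp only [stoq, hij, if_false]
    ring
  · simp only [stoq, if_true]
    ring

end

/-- **Variational (Min-Max) form of the L1 adaptive loss objective.** The largest eigenvalue
of the stoquastic `M⁺` equals the supremum, over nonnegative unit vectors `ψ`, of
`∑_{i≠j} ψᵢ ψⱼ |Mᵢⱼ| + ∑ᵢ ψᵢ² Mᵢᵢ`. -/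
theorem maxEig_stoq_eq_iSup_nonneg {n : Type*} [Fintype n] [DecidableEq n] [Nonempty n]
    {M : Matrix n n ℝ} (hM : M.IsHermitian) :
    maxEig (stoq_isHermitian hM) =
      ⨆ ψ : {ψ : n → ℝ // (∑ i, ψ i ^ 2 = 1) ∧ ∀ i, 0 ≤ ψ i},
        (∑ i, ∑ j ∈ Finset.univ \ {i}, ψ.1 i * ψ.1 j * |M i j|) +
          ∑ i, ψ.1 i ^ 2 * M i i := by
  set hA := stoq_isHermitian hM
  simp only [← dotProduct_stoq_mulVec]
  have upper (ψ : {ψ : n → ℝ // (∑ i, ψ i ^ 2 = 1) ∧ ∀ i, 0 ≤ ψ i}) :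
      ψ.1 ⬝ᵥ stoq M *ᵥ ψ.1 ≤ maxEig hA := by
    have hψ : ψ.1 ⬝ᵥ ψ.1 = 1 := by simpa [dotProduct, sq] using ψ.2.1
    simpa [hψ] using hA.dotProduct_mulVec_le_maxEig_mul_s10 ψ.1
  obtain ⟨v, hv, hvA⟩ := hA.exists_dotProduct_mulVec_eq_maxEig_s10
  let ψ₀ : {ψ : n → ℝ // (∑ i, ψ i ^ 2 = 1) ∧ ∀ i, 0 ≤ ψ i} :=
    ⟨|v|, by simpa [dotProduct, sq] using hv, fun i ↦ abs_nonneg (v i)⟩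
  have : Nonempty {ψ : n → ℝ // (∑ i, ψ i ^ 2 = 1) ∧ ∀ i, 0 ≤ ψ i} := ⟨ψ₀⟩
  refine le_antisymm ?_ (ciSup_le upper)
  calc maxEig hA = v ⬝ᵥ stoq M *ᵥ v := hvA.symm
    _ ≤ ψ₀.1 ⬝ᵥ stoq M *ᵥ ψ₀.1 :=
      dotProduct_mulVec_le_abs_of_nonneg_of_ne (fun _ _ ↦ stoq_nonneg_of_ne M) v
    _ ≤ _ := le_ciSup ⟨maxEig hA, Set.forall_mem_range.mpr upper⟩ ψ₀
end

section
/- Let G be a real symmetric matrix indexed by a finite type and let G⁺ be its stoquastic. Then for all indices i, j, |(exp(G))ᵢⱼ| ≤ (exp(G⁺))ᵢⱼ, where exp denotes the matrix exponential. -/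
open Matrix Finset

/-!
Entrywise domination `|A i j| ≤ B i j` passes to all powers, hence to every term of the
exponential series, hence to the exponentials. `G` itself is not dominated by `G⁺` when a diagonal
entry is negative, but `G + c • 1` is dominated by `G⁺ + c • 1` once `c ≥ -G i i` for all `i`,
and the shift multiplies both exponentials by the same factor `exp c`.
-/

namespace Matrix

variable {n : Type*} [Fintype n] [DecidableEq n]

theorem abs_pow_apply_le_pow_apply {R : Type*} [CommRing R] [LinearOrder R]
    [IsStrictOrderedRing R] {A B : Matrix n n R} (h : ∀ i j, |A i j| ≤ B i j) (k : ℕ) (i j : n) :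
    |(A ^ k) i j| ≤ (B ^ k) i j := by
  induction k generalizing j with
  | zero => by_cases hij : i = j <;> simp [hij]
  | succ k ih =>
    rw [pow_succ, pow_succ, mul_apply, mul_apply]
    calc |∑ l, (A ^ k) i l * A l j| ≤ ∑ l, |(A ^ k) i l| * |A l j| := by
          simpa only [abs_mul] using abs_sum_le_sum_abs (fun l => (A ^ k) i l * A l j) univ
      _ ≤ ∑ l, (B ^ k) i l * B l j := by
          gcongr with l
          · exact (abs_nonneg _).trans (ih l)
          · exact ih l
          · exact h l j

theorem hasSum_exp_series_apply (A : Matrix n n ℝ) (i j : n) :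
    HasSum (fun k : ℕ => (k.factorial : ℝ)⁻¹ * (A ^ k) i j) (NormedSpace.exp A i j) := by
  let : NormedRing (Matrix n n ℝ) := Matrix.linftyOpNormedRing
  let : NormedAlgebra ℝ (Matrix n n ℝ) := Matrix.linftyOpNormedAlgebra
  exact Pi.hasSum.mp (Pi.hasSum.mp (NormedSpace.exp_series_hasSum_exp' (𝕂 := ℝ) A) i) j

theorem abs_exp_apply_le_exp_apply {A B : Matrix n n ℝ} (h : ∀ i j, |A i j| ≤ B i j) (i j : n) :
    |NormedSpace.exp A i j| ≤ NormedSpace.exp B i j :=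
  (hasSum_exp_series_apply A i j).norm_le_of_bounded (hasSum_exp_series_apply B i j) fun k => by
    rw [Real.norm_eq_abs, abs_mul, abs_of_nonneg (by positivity)]
    exact mul_le_mul_of_nonneg_left (abs_pow_apply_le_pow_apply h k i j) (by positivity)

theorem exp_add_smul_one (A : Matrix n n ℝ) (c : ℝ) :
    NormedSpace.exp (A + c • 1) = Real.exp c • NormedSpace.exp A := by
  have exp_const : NormedSpace.exp (fun _ : n => c) = fun _ => Real.exp c :=
    funext fun _ => by rw [Pi.coe_exp, Real.exp_eq_exp_ℝ]
  rw [exp_add_of_commute _ _ ((Commute.one_right A).smul_right c), smul_one_eq_diagonal,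
    exp_diagonal, exp_const, ← smul_one_eq_diagonal, mul_smul_one]

end Matrix

theorem abs_add_smul_one_apply_le_stoq_add_smul_one {n : Type*} [DecidableEq n]
    {A : Matrix n n ℝ} {c : ℝ} (hc : ∀ i, -A i i ≤ c) (i j : n) :
    |(A + c • 1) i j| ≤ (stoq A + c • 1) i j := by
  by_cases hij : i = j
  · subst hij
    have : 0 ≤ A i i + c := by linarith [hc i]
    simp [stoq, abs_of_nonneg this]
  · simp [stoq, hij]

theorem abs_exp_le_exp_stoq_general {n : Type*} [Fintype n] [DecidableEq n]
    {G : Matrix n n ℝ} :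
    ∀ i j, |NormedSpace.exp G i j| ≤ NormedSpace.exp (stoq G) i j := by
  intro i j
  obtain ⟨c, hc⟩ := Finite.exists_le fun k => -G k k
  have h := abs_exp_apply_le_exp_apply (abs_add_smul_one_apply_le_stoq_add_smul_one hc) i j
  rw [exp_add_smul_one, exp_add_smul_one, Matrix.smul_apply, Matrix.smul_apply, smul_eq_mul,
    smul_eq_mul, abs_mul, abs_of_pos (Real.exp_pos c)] at h
  exact le_of_mul_le_mul_left h (Real.exp_pos c)

/-- **Entrywise exponential bound by the stoquastic.** For a real symmetric matrix `G` and
its stoquastic `G⁺`, every entry satisfies `|(exp G)ᵢⱼ| ≤ (exp G⁺)ᵢⱼ`. -/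
theorem abs_exp_le_exp_stoq {n : Type*} [Fintype n] [DecidableEq n]
    {G : Matrix n n ℝ} (hG : G.IsHermitian) :
    ∀ i j, |NormedSpace.exp G i j| ≤ NormedSpace.exp (stoq G) i j :=
  abs_exp_le_exp_stoq_general
end

section
/- Let A be a real symmetric matrix indexed by a finite nonempty type, and let λ(A) denote its largest eigenvalue. Then (1/β)·log(Tr exp(βA)) converges to λ(A) as β → ∞. -/
/-!
Diagonalising `A = U D U⁻¹` by the unitary of its eigenvectors gives
`Tr exp(βA) = ∑ᵢ exp(β λᵢ)`. For `β > 0` this sum lies between its largest term `exp(β λ(A))` and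
`n · exp(β λ(A))`, so `(1/β) log Tr exp(βA)` is squeezed between `λ(A)` and `λ(A) + (log n)/β`.
-/

open Matrix Finset

theorem Matrix.IsHermitian.trace_exp_smul {𝕜 : Type*} [RCLike 𝕜] {n : Type*} [Fintype n]
    [DecidableEq n] {A : Matrix n n 𝕜} (hA : A.IsHermitian) (β : ℝ) :
    (NormedSpace.exp (β • A)).trace = ∑ i, (Real.exp (β * hA.eigenvalues i) : 𝕜) := by
  set U : Matrix n n 𝕜 := (hA.eigenvectorUnitary : Matrix n n 𝕜)
  have hU : U⁻¹ = star U := inv_eq_left_inv (Unitary.coe_star_mul_self _)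
  have hUinv : U⁻¹ * U = 1 := hU ▸ Unitary.coe_star_mul_self _
  have hβA : β • A = U * diagonal (fun i => ((β * hA.eigenvalues i : ℝ) : 𝕜)) * U⁻¹ := by
    conv_lhs => rw [hA.spectral_theorem]
    rw [hU, RCLike.real_smul_eq_coe_smul (K := 𝕜),
      ← Unitary.conjStarAlgAut_apply (S := 𝕜), ← map_smul, ← diagonal_smul]
    congr 2 with i
    simp
  rw [hβA, exp_conj _ _ (.of_mul_eq_one_right _ hUinv), trace_mul_cycle, hUinv, one_mul,
    exp_diagonal, trace_diagonal]
  congr 1 with i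
  rw [Pi.exp_def, Real.exp_eq_exp_ℝ]
  exact (NormedSpace.algebraMap_exp_comm _).symm

namespace Real

open Filter Topology

variable {ι : Type*} [Fintype ι] [Nonempty ι] (c : ι → ℝ)

theorem mul_iSup_le_log_sum_exp_mul (β : ℝ) : β * (⨆ i, c i) ≤ log (∑ i, exp (β * c i)) := by
  obtain ⟨i, hi⟩ := exists_eq_ciSup_of_finite (f := c)
  rw [← hi, le_log_iff_exp_le (by positivity)]
  exact single_le_sum (f := fun i => exp (β * c i)) (fun j _ => (exp_pos _).le) (mem_univ i)

theorem log_sum_exp_mul_le {β : ℝ} (hβ : 0 ≤ β) :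
    log (∑ i, exp (β * c i)) ≤ β * (⨆ i, c i) + log (Fintype.card ι) := by
  rw [log_le_iff_le_exp (by positivity), exp_add, exp_log (by positivity), mul_comm]
  calc ∑ i, exp (β * c i) ≤ ∑ _i : ι, exp (β * (⨆ i, c i)) :=
        sum_le_sum fun i _ => exp_le_exp.2 (mul_le_mul_of_nonneg_left (Finite.le_ciSup c i) hβ)
    _ = Fintype.card ι * exp (β * (⨆ i, c i)) := by simp

theorem tendsto_one_div_mul_log_sum_exp_mul :
    Tendsto (fun β => 1 / β * log (∑ i, exp (β * c i))) atTop (𝓝 (⨆ i, c i)) := by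
  have hupper : Tendsto (fun β => (⨆ i, c i) + log (Fintype.card ι) / β) atTop (𝓝 (⨆ i, c i)) := by
    simpa using tendsto_const_nhds.add (tendsto_const_nhds.div_atTop (tendsto_id (α := ℝ)))
  refine tendsto_of_tendsto_of_tendsto_of_le_of_le' tendsto_const_nhds hupper ?_ ?_ <;>
    filter_upwards [eventually_gt_atTop 0] with β hβ
  · rw [one_div, le_inv_mul_iff₀ hβ]
    exact mul_iSup_le_log_sum_exp_mul c β
  · rw [one_div, inv_mul_le_iff₀ hβ, mul_add, mul_div_cancel₀ _ hβ.ne']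
    exact log_sum_exp_mul_le c hβ.le

end Real

/-- **Low-temperature asymptotics of the free energy.** For a real symmetric matrix `A`,
`(1/β)·log(Tr exp(βA)) → λ(A)` as `β → ∞`. -/
theorem tendsto_log_trace_exp_div {n : Type*} [Fintype n] [DecidableEq n] [Nonempty n]
    {A : Matrix n n ℝ} (hA : A.IsHermitian) :
    Filter.Tendsto (fun β : ℝ => (1 / β) * Real.log (NormedSpace.exp (β • A)).trace)
      Filter.atTop (nhds (maxEig hA)) := by
  simp only [hA.trace_exp_smul, RCLike.ofReal_real_eq_id, id]
  exact Real.tendsto_one_div_mul_log_sum_exp_mul hA.eigenvalues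
end
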